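/- Let (q(s))_{s ∈ 2ℤ} ∈ ℓ²(2ℤ), n ≥ 3 an integer, and λ ∈ ℂ with (n-1)² ≤ Re λ ≤ (n+1)² and |λ - n²| ≥ n/4. Then there is an absolute constant C such that ∑_{s ∈ 2ℤ} ∑_{m ∈ n+2ℤ} s²|q(s)|² / (|λ - m²|·|λ - (m+s)²|) ≤ C·( E_{√n}(q)² + ‖q‖²/n ·(1 + log n) ), where E_ρ(q)² = ∑_{|s| ≥ ρ} |q(s)|² is the tail of the ℓ² norm. -/

import Mathlib

open scoped BigOperators
open Real

open Real

namespace Stmt19Aux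

noncomputable def ee (t : ℤ) : ℝ := max 1 |(t : ℝ)|

lemma one_le_ee (t : ℤ) : 1 ≤ ee t := le_max_left _ _
lemma ee_pos (t : ℤ) : 0 < ee t := lt_of_lt_of_le one_pos (one_le_ee t)
lemma ee_nonneg (t : ℤ) : 0 ≤ ee t := (ee_pos t).le

/-- telescoping partial sums -/
lemma tele_partial (a : ℕ) (ha : 1 ≤ a) (N : ℕ) :
    ∑ k ∈ Finset.range N, (1:ℝ)/(((k:ℝ)+a)*((k:ℝ)+a+1)) ≤ 1/a := by
  have h : ∀ k ∈ Finset.range N, (1:ℝ)/(((k:ℝ)+a)*((k:ℝ)+a+1))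
      = 1/((k:ℝ)+a) - 1/((k:ℝ)+a+1) := by
    intro k _
    have h1 : (0:ℝ) < (k:ℝ)+a := by positivity
    have h2 : (0:ℝ) < (k:ℝ)+a+1 := by positivity
    field_simp
    ring
  rw [Finset.sum_congr rfl h]
  have := Finset.sum_range_sub' (f := fun k => 1/((k:ℝ)+a)) N
  have heq : ∑ k ∈ Finset.range N, ((1:ℝ)/((k:ℝ)+a) - 1/((k:ℝ)+a+1))
      = 1/((0:ℕ)+(a:ℝ)) - 1/((N:ℝ)+a) := by
    rw [← this]
    apply Finset.sum_congr rfl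
    intro k _
    push_cast
    ring_nf
  rw [heq]
  have h0 : (0:ℝ) ≤ 1/((N:ℝ)+a) := by positivity
  have h1 : 1/((0:ℕ)+(a:ℝ)) = 1/a := by norm_num
  linarith

lemma tele_tsum (a : ℕ) (ha : 1 ≤ a) :
    ∑' k : ℕ, (1:ℝ)/(((k:ℝ)+a)*((k:ℝ)+a+1)) ≤ 1/a :=
  Real.tsum_le_of_sum_range_le (fun k => by positivity) (tele_partial a ha)

end Stmt19Aux
namespace Stmt19Aux

lemma ee_zero : ee 0 = 1 := by simp [ee]
lemma ee_neg (t : ℤ) : ee (-t) = ee t := by simp [ee]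
lemma ee_eq (t : ℤ) (h : 1 ≤ t) : ee t = (t:ℝ) := by
  have h' : (1:ℝ) ≤ (t:ℝ) := by exact_mod_cast h
  rw [ee, abs_of_nonneg (by linarith), max_eq_right h']

lemma master_partial (c : ℝ) (f : ℕ → ℝ)
    (h : ∀ k, f k ≤ c/(((k:ℝ)+1)*((k:ℝ)+2))) (hc : 0 ≤ c) (N : ℕ) :
    ∑ k ∈ Finset.range N, f k ≤ c := by
  calc ∑ k ∈ Finset.range N, f k
      ≤ ∑ k ∈ Finset.range N, c/(((k:ℝ)+1)*((k:ℝ)+2)) :=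
        Finset.sum_le_sum fun k _ => h k
    _ = c * ∑ k ∈ Finset.range N, 1/(((k:ℝ)+1)*((k:ℝ)+1+1)) := by
        rw [Finset.mul_sum]; apply Finset.sum_congr rfl; intro k _; ring_nf
    _ ≤ c * (1/(1:ℕ)) := by
        apply mul_le_mul_of_nonneg_left _ hc
        have := tele_partial 1 le_rfl N
        simpa using this
    _ ≤ c := by norm_num

lemma master_summable (c : ℝ) (f : ℕ → ℝ) (hf0 : ∀ k, 0 ≤ f k)
    (h : ∀ k, f k ≤ c/(((k:ℝ)+1)*((k:ℝ)+2))) (hc : 0 ≤ c) : Summable f :=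
  summable_of_sum_range_le hf0 (master_partial c f h hc)

lemma master_tsum (c : ℝ) (f : ℕ → ℝ) (hf0 : ∀ k, 0 ≤ f k)
    (h : ∀ k, f k ≤ c/(((k:ℝ)+1)*((k:ℝ)+2))) (hc : 0 ≤ c) : ∑' k, f k ≤ c :=
  Real.tsum_le_of_sum_range_le hf0 (master_partial c f h hc)

/-- the quadratic majorant on ℕ -/
lemma F2_nat_le (k : ℕ) : 1/(ee k)^2 ≤ 6/(((k:ℝ)+1)*((k:ℝ)+2)) := by
  rcases Nat.eq_zero_or_pos k with hk | hk
  · subst hk; simp [ee_zero]; norm_num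
  · rw [ee_eq k (by exact_mod_cast hk)]
    have hk' : (1:ℝ) ≤ (k:ℝ) := by exact_mod_cast hk
    rw [div_le_div_iff₀ (by positivity) (by positivity)]
    push_cast
    nlinarith

lemma F2_negnat_le (k : ℕ) : 1/(ee (-((k:ℤ)+1)))^2 ≤ 6/(((k:ℝ)+1)*((k:ℝ)+2)) := by
  rw [ee_neg, ee_eq _ (by omega)]
  have hk' : (0:ℝ) ≤ (k:ℝ) := by positivity
  push_cast
  rw [div_le_div_iff₀ (by positivity) (by positivity)]
  nlinarith

lemma summable_F2_int : Summable (fun t : ℤ => 1/(ee t)^2) := by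
  apply Summable.of_nat_of_neg_add_one
  · exact master_summable 6 _ (fun k => by positivity) F2_nat_le (by norm_num)
  · exact master_summable 6 _ (fun k => by positivity) F2_negnat_le (by norm_num)

lemma tsum_F2_int : ∑' t : ℤ, 1/(ee t)^2 ≤ 12 := by
  rw [tsum_of_nat_of_neg_add_one
    (master_summable 6 _ (fun k => by positivity) F2_nat_le (by norm_num))
    (master_summable 6 _ (fun k => by positivity) F2_negnat_le (by norm_num))]
  have h1 := master_tsum 6 _ (fun k : ℕ => by positivity : ∀ k:ℕ, (0:ℝ) ≤ 1/(ee k)^2) F2_nat_le (by norm_num)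
  have h2 := master_tsum 6 _ (fun k : ℕ => by positivity : ∀ k:ℕ, (0:ℝ) ≤ 1/(ee (-((k:ℤ)+1)))^2) F2_negnat_le (by norm_num)
  linarith

end Stmt19Aux
namespace Stmt19Aux

noncomputable def Hl (n : ℕ) (t : ℤ) : ℝ := 1/(ee t * ((n:ℝ) + ee t))

lemma Hl_nonneg (n : ℕ) (t : ℤ) : 0 ≤ Hl n t := by
  have := ee_pos t
  have : (0:ℝ) ≤ (n:ℝ) + ee t := by positivity
  unfold Hl; positivity

lemma Hl_le_F2 (n : ℕ) (t : ℤ) : Hl n t ≤ 1/(ee t)^2 := by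
  unfold Hl
  have h1 := ee_pos t
  apply div_le_div_of_nonneg_left (by norm_num) (by positivity)
  nlinarith [Nat.cast_nonneg (α := ℝ) n]

lemma summable_Hl_nat (n : ℕ) : Summable (fun k : ℕ => Hl n k) :=
  master_summable 6 _ (fun k => Hl_nonneg n k)
    (fun k => (Hl_le_F2 n k).trans (F2_nat_le k)) (by norm_num)

lemma summable_Hl_int (n : ℕ) : Summable (fun t : ℤ => Hl n t) := by
  apply Summable.of_nat_of_neg_add_one (summable_Hl_nat n)
  exact master_summable 6 _ (fun k => Hl_nonneg n _)
    (fun k => (Hl_le_F2 n _).trans (F2_negnat_le k)) (by norm_num)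

lemma harmonic_cast (n : ℕ) : ((harmonic n : ℚ) : ℝ) = ∑ i ∈ Finset.range n, ((i:ℝ)+1)⁻¹ := by
  rw [harmonic]
  push_cast
  rfl

lemma tsum_Hl_nat (n : ℕ) (hn : 1 ≤ n) : ∑' k : ℕ, Hl n k ≤ (3 + Real.log n)/n := by
  have hn' : (1:ℝ) ≤ (n:ℝ) := by exact_mod_cast hn
  rw [← Summable.sum_add_tsum_nat_add (n+1) (summable_Hl_nat n)]
  have hA : ∑ i ∈ Finset.range (n+1), Hl n i ≤ (2 + Real.log n)/n := by
    rw [Finset.sum_range_succ']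
    have h0 : Hl n 0 ≤ 1/n := by
      rw [Hl]
      push_cast
      rw [ee_zero]
      rw [div_le_div_iff₀ (by linarith) (by linarith)]
      nlinarith
    have hterm : ∀ i ∈ Finset.range n, Hl n ((i:ℕ)+1:ℕ) ≤ 1/(((i:ℝ)+1)*n) := by
      intro i _
      rw [Hl, ee_eq _ (by omega)]
      have hi : (0:ℝ) ≤ (i:ℝ) := by positivity
      push_cast
      rw [div_le_div_iff₀ (by nlinarith) (by nlinarith)]
      nlinarith
    have hsum : ∑ i ∈ Finset.range n, Hl n ((i:ℕ)+1:ℕ) ≤ (1 + Real.log n)/n := by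
      calc ∑ i ∈ Finset.range n, Hl n ((i:ℕ)+1:ℕ)
          ≤ ∑ i ∈ Finset.range n, 1/(((i:ℝ)+1)*n) := Finset.sum_le_sum hterm
        _ = (∑ i ∈ Finset.range n, ((i:ℝ)+1)⁻¹) / n := by
            rw [Finset.sum_div]
            apply Finset.sum_congr rfl
            intro i _
            rw [one_div, mul_inv, div_eq_mul_inv]
        _ ≤ (1 + Real.log n)/n := by
            apply div_le_div_of_nonneg_right _ (by linarith)
            rw [← harmonic_cast]
            exact_mod_cast harmonic_le_one_add_log n
    calc ∑ i ∈ Finset.range n, Hl n ((i:ℕ)+1:ℕ) + Hl n 0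
        ≤ (1 + Real.log n)/n + 1/n := add_le_add hsum h0
      _ = (2 + Real.log n)/n := by ring
  have hB : ∑' k : ℕ, Hl n ((k:ℕ) + (n+1) : ℕ) ≤ 1/n := by
    apply Real.tsum_le_of_sum_range_le (fun k => Hl_nonneg n _)
    intro N
    calc ∑ k ∈ Finset.range N, Hl n ((k:ℕ)+(n+1):ℕ)
        ≤ ∑ k ∈ Finset.range N, (1:ℝ)/(((k:ℝ)+n)*((k:ℝ)+n+1)) := by
          apply Finset.sum_le_sum
          intro k _
          rw [Hl, ee_eq _ (by omega)]
          have hk : (0:ℝ) ≤ (k:ℝ) := by positivity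
          push_cast
          rw [div_le_div_iff₀ (by nlinarith) (by nlinarith)]
          nlinarith
      _ ≤ 1/n := tele_partial n hn N
  calc ∑ i ∈ Finset.range (n+1), Hl n i + ∑' k : ℕ, Hl n (k + (n+1) : ℕ)
      ≤ (2 + Real.log n)/n + 1/n := add_le_add hA hB
    _ = (3 + Real.log n)/n := by ring

lemma tsum_Hl_int (n : ℕ) (hn : 1 ≤ n) : ∑' t : ℤ, Hl n t ≤ 2*(3 + Real.log n)/n := by
  have hneg : Summable (fun k : ℕ => Hl n (-((k:ℤ)+1))) :=
    master_summable 6 _ (fun k => Hl_nonneg n _)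
      (fun k => (Hl_le_F2 n _).trans (F2_negnat_le k)) (by norm_num)
  rw [tsum_of_nat_of_neg_add_one (summable_Hl_nat n) hneg]
  have h1 := tsum_Hl_nat n hn
  have h2 : ∑' k : ℕ, Hl n (-((k:ℤ)+1)) ≤ (3 + Real.log n)/n := by
    have heq : ∀ k : ℕ, Hl n (-((k:ℤ)+1)) = Hl n ((k:ℕ)+1:ℕ) := by
      intro k
      rw [Hl, Hl, ee_neg]
      norm_num
    rw [tsum_congr heq]
    have := Summable.sum_add_tsum_nat_add (f := fun k : ℕ => Hl n k) 1 (summable_Hl_nat n)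
    have h0 : 0 ≤ ∑ i ∈ Finset.range 1, Hl n i := by
      simp [Finset.sum_range_one]
      exact Hl_nonneg n 0
    have : ∑' k : ℕ, Hl n ((k:ℕ)+1:ℕ) ≤ ∑' k : ℕ, Hl n k := by
      rw [← this]
      simpa using h0
    linarith
  calc ∑' (k : ℕ), Hl n (k:ℕ) + ∑' (k : ℕ), Hl n (-((k:ℤ) + 1))
      ≤ (3 + Real.log n)/n + (3 + Real.log n)/n := add_le_add h1 h2
    _ = 2*(3 + Real.log n)/n := by ring

end Stmt19Aux
namespace Stmt19Aux

lemma abs_sub_re (lam : ℂ) (m : ℤ) :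
    |lam.re - ((m:ℝ))^2| ≤ ‖lam - (m:ℂ)^2‖ := by
  have h := Complex.abs_re_le_norm (lam - (m:ℂ)^2)
  have hre : (lam - (m:ℂ)^2).re = lam.re - (m:ℝ)^2 := by
    have : ((m:ℂ))^2 = (((m^2 : ℤ) : ℝ) : ℂ) := by push_cast; ring
    rw [Complex.sub_re, this, Complex.ofReal_re]
    push_cast
    ring
  rwa [hre] at h

lemma Dlow (n : ℕ) (hn : 3 ≤ n) (lam : ℂ) (h1 : ((n:ℝ)-1)^2 ≤ lam.re)
    (h2 : lam.re ≤ ((n:ℝ)+1)^2) (h3 : (n:ℝ)/4 ≤ ‖lam - (n:ℂ)^2‖)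
    (m : ℤ) (hm : ∃ j : ℤ, m = (n:ℤ) + 2*j) :
    ee (|m| - n) * ((n:ℝ) + ee (|m| - n)) / 8 ≤ ‖lam - (m:ℂ)^2‖ := by
  obtain ⟨j, hj⟩ := hm
  have hN : (3:ℝ) ≤ (n:ℝ) := by exact_mod_cast hn
  have hdvd : (2:ℤ) ∣ (|m| - n) := by
    rcases abs_choice m with h | h <;> rw [h] <;> omega
  have hm2 : ((m:ℝ))^2 = ((|m| : ℤ):ℝ)^2 := by
    rcases abs_choice m with h | h <;> rw [h] <;> push_cast <;> ring
  have habs := abs_sub_re lam m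
  by_cases htn : |m| = (n:ℤ)
  · -- |m| = n
    have hsq : (m:ℂ)^2 = (n:ℂ)^2 := by
      have : m^2 = (n:ℤ)^2 := by rw [← sq_abs m, htn]
      calc (m:ℂ)^2 = ((m^2 : ℤ) : ℂ) := by push_cast; ring
        _ = (((n:ℤ)^2 : ℤ) : ℂ) := by rw [this]
        _ = (n:ℂ)^2 := by push_cast; ring
    rw [hsq]
    have he : ee (|m| - n) = 1 := by rw [htn]; simp [ee_zero]
    rw [he]
    nlinarith
  · have habs2 : (2:ℤ) ≤ abs (|m| - (n:ℤ)) := by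
      have hd0 : 0 ≤ abs (|m| - (n:ℤ)) := abs_nonneg _
      rcases abs_choice (|m| - (n:ℤ)) with h | h <;> omega
    have hee : ee (|m| - n) = |((|m|:ℤ):ℝ) - (n:ℝ)| := by
      rw [ee]
      have : |((|m| - n : ℤ) : ℝ)| = |((|m|:ℤ):ℝ) - (n:ℝ)| := by push_cast; ring_nf
      rw [this]
      apply max_eq_right
      rw [← this]
      have : (2:ℝ) ≤ |((|m| - n : ℤ) : ℝ)| := by exact_mod_cast (Int.cast_le.mpr habs2).trans_eq (by push_cast; rfl)
      linarith
    set T : ℝ := ((|m|:ℤ):ℝ) with hT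
    have hT0 : 0 ≤ T := by positivity
    rcases lt_or_gt_of_ne htn with hlt | hgt
    · -- |m| ≤ n - 2
      have hle : |m| ≤ (n:ℤ) - 2 := by omega
      have hTle : T ≤ (n:ℝ) - 2 := by
        rw [hT]; exact_mod_cast hle
      have heq : ee (|m| - n) = (n:ℝ) - T := by rw [hee]; rw [abs_of_nonpos (by linarith)]; ring
      rw [heq]
      have hlow : (n:ℝ)*(n:ℝ) - 2*(n:ℝ) + 1 - T^2 ≤ ‖lam - (m:ℂ)^2‖ := by
        have : lam.re - (m:ℝ)^2 ≤ |lam.re - (m:ℝ)^2| := le_abs_self _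
        have h1' : ((n:ℝ)-1)^2 - T^2 ≤ lam.re - (m:ℝ)^2 := by
          rw [hm2]; linarith
        nlinarith [habs]
      nlinarith
    · -- |m| ≥ n + 2
      have hge : (n:ℤ) + 2 ≤ |m| := by omega
      have hTge : (n:ℝ) + 2 ≤ T := by rw [hT]; exact_mod_cast hge
      have heq : ee (|m| - n) = T - (n:ℝ) := by rw [hee]; rw [abs_of_nonneg (by linarith)]
      rw [heq]
      have hlow : T^2 - ((n:ℝ)*(n:ℝ) + 2*(n:ℝ) + 1) ≤ ‖lam - (m:ℂ)^2‖ := by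
        have : -(lam.re - (m:ℝ)^2) ≤ |lam.re - (m:ℝ)^2| := neg_le_abs _
        have h2' : (m:ℝ)^2 - lam.re ≥ T^2 - ((n:ℝ)+1)^2 := by
          rw [hm2]; linarith
        nlinarith [habs]
      nlinarith

lemma Dpos (n : ℕ) (hn : 3 ≤ n) (lam : ℂ) (h1 : ((n:ℝ)-1)^2 ≤ lam.re)
    (h2 : lam.re ≤ ((n:ℝ)+1)^2) (h3 : (n:ℝ)/4 ≤ ‖lam - (n:ℂ)^2‖)
    (m : ℤ) (hm : ∃ j : ℤ, m = (n:ℤ) + 2*j) :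
    0 < ‖lam - (m:ℂ)^2‖ := by
  have h := Dlow n hn lam h1 h2 h3 m hm
  have h1' := ee_pos (|m| - n)
  have hN : (0:ℝ) ≤ (n:ℝ) := by positivity
  nlinarith [one_le_ee (|m| - (n:ℤ))]

end Stmt19Aux
namespace Stmt19Aux

section Main

variable (n : ℕ) (hn : 3 ≤ n) (lam : ℂ) (h1 : ((n:ℝ)-1)^2 ≤ lam.re)
  (h2 : lam.re ≤ ((n:ℝ)+1)^2) (h3 : (n:ℝ)/4 ≤ ‖lam - (n:ℂ)^2‖)

local notation "P" => fun m : ℤ => ‖lam - (m:ℂ)^2‖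

lemma Hl_abs_le (m : ℤ) : Hl n (|m| - n) ≤ Hl n (m - n) + Hl n (-m - n) := by
  rcases abs_choice m with h | h <;> rw [h]
  · have := Hl_nonneg n (-m - n); linarith
  · have := Hl_nonneg n (m - n)
    have : Hl n (-m - (n:ℤ)) = Hl n (-m - n) := rfl
    linarith [Hl_nonneg n (m - (n:ℤ))]

lemma F2_abs_le (m : ℤ) : 1/(ee (|m| - n))^2 ≤ 1/(ee (m - n))^2 + 1/(ee (-m - n))^2 := by
  rcases abs_choice m with h | h <;> rw [h]
  · have : (0:ℝ) ≤ 1/(ee (-m - (n:ℤ)))^2 := by positivity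
    linarith
  · have : (0:ℝ) ≤ 1/(ee (m - (n:ℤ)))^2 := by positivity
    linarith

include hn h1 h2 h3 in
lemma inv_P_le (m : ℤ) (hm : ∃ j : ℤ, m = (n:ℤ) + 2*j) :
    1/(P m) ≤ 8 * (Hl n (m - n) + Hl n (-m - n)) := by
  have hD := Dlow n hn lam h1 h2 h3 m hm
  have hP := Dpos n hn lam h1 h2 h3 m hm
  have he := ee_pos (|m| - (n:ℤ))
  have hne : (0:ℝ) < ee (|m| - n) * ((n:ℝ) + ee (|m| - n)) / 8 := by
    have : (0:ℝ) ≤ (n:ℝ) := by positivity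
    nlinarith
  have step : 1/(P m) ≤ 8 * Hl n (|m| - n) := by
    calc 1/(P m) ≤ 1/(ee (|m| - n) * ((n:ℝ) + ee (|m| - n)) / 8) :=
          one_div_le_one_div_of_le hne hD
      _ = 8 * Hl n (|m| - n) := by rw [Hl, one_div_div, mul_one_div]
  calc 1/(P m) ≤ 8 * Hl n (|m| - n) := step
    _ ≤ 8 * (Hl n (m - n) + Hl n (-m - n)) := by
        have := Hl_abs_le n m
        linarith

include hn h1 h2 h3 in
lemma inv_P_le_abs (m : ℤ) (hm : ∃ j : ℤ, m = (n:ℤ) + 2*j) :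
    1/(P m) ≤ 8 * Hl n (|m| - n) := by
  have hD := Dlow n hn lam h1 h2 h3 m hm
  have hP := Dpos n hn lam h1 h2 h3 m hm
  have he := ee_pos (|m| - (n:ℤ))
  have hne : (0:ℝ) < ee (|m| - n) * ((n:ℝ) + ee (|m| - n)) / 8 := by
    have : (0:ℝ) ≤ (n:ℝ) := by positivity
    nlinarith
  calc 1/(P m) ≤ 1/(ee (|m| - n) * ((n:ℝ) + ee (|m| - n)) / 8) :=
        one_div_le_one_div_of_le hne hD
    _ = 8 * Hl n (|m| - n) := by rw [Hl, one_div_div, mul_one_div]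

include hn h1 h2 h3 in
lemma inv_P_sq_le (m : ℤ) (hm : ∃ j : ℤ, m = (n:ℤ) + 2*j) :
    (1/(P m))^2 ≤ 64/(n:ℝ)^2 * (1/(ee (m - n))^2 + 1/(ee (-m - n))^2) := by
  have hstep := inv_P_le_abs n hn lam h1 h2 h3 m hm
  have hP := Dpos n hn lam h1 h2 h3 m hm
  have hnn : (0:ℝ) ≤ 1/(P m) := by positivity
  have hHl : Hl n (|m| - n) ≤ 1/((n:ℝ) * ee (|m| - n)) := by
    rw [Hl]
    have he := ee_pos (|m| - (n:ℤ))
    have hN : (3:ℝ) ≤ (n:ℝ) := by exact_mod_cast hn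
    apply div_le_div_of_nonneg_left (by norm_num) (by positivity)
    nlinarith
  have hsq : (1/(P m))^2 ≤ (8 * (1/((n:ℝ) * ee (|m| - n))))^2 := by
    apply pow_le_pow_left₀ hnn
    calc 1/(P m) ≤ 8 * Hl n (|m| - n) := hstep
      _ ≤ 8 * (1/((n:ℝ) * ee (|m| - n))) := by linarith
  have hN : (3:ℝ) ≤ (n:ℝ) := by exact_mod_cast hn
  have he := ee_pos (|m| - (n:ℤ))
  have heq : (8 * (1/((n:ℝ) * ee (|m| - n))))^2 = 64/(n:ℝ)^2 * (1/(ee (|m| - n))^2) := by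
    field_simp
    ring
  have habs := F2_abs_le n m
  calc (1/(P m))^2 ≤ 64/(n:ℝ)^2 * (1/(ee (|m| - n))^2) := by rw [← heq]; exact hsq
    _ ≤ 64/(n:ℝ)^2 * (1/(ee (m - n))^2 + 1/(ee (-m - n))^2) := by
        apply mul_le_mul_of_nonneg_left habs (by positivity)

end Main

def shiftEquiv' (c : ℤ) : ℤ ≃ ℤ :=
  ⟨fun m => m - c, fun m => m + c, fun m => by simp, fun m => by simp⟩

def reflectEquiv' (c : ℤ) : ℤ ≃ ℤ :=
  ⟨fun m => -m - c, fun m => -(m + c), fun m => by ring_nf, fun m => by ring_nf⟩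

@[simp] lemma shiftEquiv'_apply (c m : ℤ) : shiftEquiv' c m = m - c := rfl
@[simp] lemma reflectEquiv'_apply (c m : ℤ) : reflectEquiv' c m = -m - c := rfl

section Main2
variable (n : ℕ)

lemma summable_Hl_shift (c : ℤ) : Summable (fun m : ℤ => Hl n (m - c)) :=
  ((Equiv.summable_iff (shiftEquiv' c) (f := Hl n)).mpr (summable_Hl_int n)).congr
    fun m => by rw [Function.comp_apply, shiftEquiv'_apply]

lemma summable_Hl_reflect (c : ℤ) : Summable (fun m : ℤ => Hl n (-m - c)) :=
  ((Equiv.summable_iff (reflectEquiv' c) (f := Hl n)).mpr (summable_Hl_int n)).congr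
    fun m => by rw [Function.comp_apply, reflectEquiv'_apply]

lemma tsum_Hl_shift (c : ℤ) : ∑' m : ℤ, Hl n (m - c) = ∑' t : ℤ, Hl n t := by
  rw [← (shiftEquiv' c).tsum_eq (Hl n)]
  exact tsum_congr fun m => by rw [shiftEquiv'_apply]

lemma tsum_Hl_reflect (c : ℤ) : ∑' m : ℤ, Hl n (-m - c) = ∑' t : ℤ, Hl n t := by
  rw [← (reflectEquiv' c).tsum_eq (Hl n)]
  exact tsum_congr fun m => by rw [reflectEquiv'_apply]

lemma summable_F2_shift (c : ℤ) : Summable (fun m : ℤ => 1/(ee (m - c))^2) :=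
  ((Equiv.summable_iff (shiftEquiv' c) (f := fun t => 1/(ee t)^2)).mpr summable_F2_int).congr
    fun m => by rw [Function.comp_apply, shiftEquiv'_apply]

lemma summable_F2_reflect (c : ℤ) : Summable (fun m : ℤ => 1/(ee (-m - c))^2) :=
  ((Equiv.summable_iff (reflectEquiv' c) (f := fun t => 1/(ee t)^2)).mpr summable_F2_int).congr
    fun m => by rw [Function.comp_apply, reflectEquiv'_apply]

lemma tsum_F2_shift (c : ℤ) : ∑' m : ℤ, 1/(ee (m - c))^2 = ∑' t : ℤ, 1/(ee t)^2 := by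
  rw [← (shiftEquiv' c).tsum_eq (fun t => 1/(ee t)^2)]
  exact tsum_congr fun m => by rw [shiftEquiv'_apply]

lemma tsum_F2_reflect (c : ℤ) : ∑' m : ℤ, 1/(ee (-m - c))^2 = ∑' t : ℤ, 1/(ee t)^2 := by
  rw [← (reflectEquiv' c).tsum_eq (fun t => 1/(ee t)^2)]
  exact tsum_congr fun m => by rw [reflectEquiv'_apply]

end Main2
section Main3

variable (n : ℕ) (hn : 3 ≤ n) (lam : ℂ) (h1 : ((n:ℝ)-1)^2 ≤ lam.re)
  (h2 : lam.re ≤ ((n:ℝ)+1)^2) (h3 : (n:ℝ)/4 ≤ ‖lam - (n:ℂ)^2‖)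

local notation "P" => fun m : ℤ => ‖lam - (m:ℂ)^2‖
local notation "M" => {m : ℤ // ∃ j : ℤ, m = (n:ℤ) + 2*j}

include hn h1 h2 h3 in
lemma sumM_inv_P (c : ℤ) (hc : Even c) :
    Summable (fun m : M => 1/(P ((m:ℤ) + c))) ∧
    ∑' m : M, 1/(P ((m:ℤ) + c)) ≤ 32*(3 + Real.log n)/n := by
  set u : ℤ → ℝ := fun m => 8 * (Hl n (m - ((n:ℤ) - c)) + Hl n (-m - ((n:ℤ) + c))) with hu_def
  have huA := summable_Hl_shift n ((n:ℤ) - c)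
  have huB := summable_Hl_reflect n ((n:ℤ) + c)
  have hu : Summable u := (huA.add huB).mul_left 8
  have hu0 : ∀ m : ℤ, 0 ≤ u m := by
    intro m
    have hA := Hl_nonneg n (m - ((n:ℤ) - c))
    have hB := Hl_nonneg n (-m - ((n:ℤ) + c))
    simp only [hu_def]
    linarith
  have hptw : ∀ m : M, 1/(P ((m:ℤ) + c)) ≤ u (m:ℤ) := by
    intro m
    obtain ⟨a, ha⟩ := hc
    obtain ⟨j, hj⟩ := m.2
    have hpar : ∃ j' : ℤ, (m:ℤ) + c = (n:ℤ) + 2*j' := ⟨j + a, by omega⟩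
    have h := inv_P_le n hn lam h1 h2 h3 ((m:ℤ) + c) hpar
    have e1 : (m:ℤ) + c - n = (m:ℤ) - ((n:ℤ) - c) := by ring
    have e2 : -((m:ℤ) + c) - n = -(m:ℤ) - ((n:ℤ) + c) := by ring
    rw [e1, e2] at h
    exact h
  have hx0 : ∀ m : M, 0 ≤ 1/(P ((m:ℤ) + c)) := by
    intro m
    have := norm_nonneg (lam - (((m:ℤ) + c : ℤ) : ℂ)^2)
    positivity
  have huM : Summable (fun m : M => u (m:ℤ)) := hu.subtype _
  have hxsum : Summable (fun m : M => 1/(P ((m:ℤ) + c))) :=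
    Summable.of_nonneg_of_le hx0 hptw huM
  refine ⟨hxsum, ?_⟩
  have hlog := tsum_Hl_int n (by omega)
  calc ∑' m : M, 1/(P ((m:ℤ) + c))
      ≤ ∑' m : M, u (m:ℤ) := Summable.tsum_le_tsum hptw hxsum huM
    _ ≤ ∑' m : ℤ, u m := Summable.tsum_subtype_le u _ hu0 hu
    _ = 8 * ((∑' m : ℤ, Hl n (m - ((n:ℤ) - c))) + ∑' m : ℤ, Hl n (-m - ((n:ℤ) + c))) := by
        rw [hu_def, tsum_mul_left, Summable.tsum_add huA huB]
    _ = 8 * ((∑' t : ℤ, Hl n t) + ∑' t : ℤ, Hl n t) := by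
        rw [tsum_Hl_shift, tsum_Hl_reflect]
    _ ≤ 8 * (2*(3 + Real.log n)/n + 2*(3 + Real.log n)/n) := by
        apply mul_le_mul_of_nonneg_left (add_le_add hlog hlog) (by norm_num)
    _ = 32*(3 + Real.log n)/n := by ring

include hn h1 h2 h3 in
lemma sumM_PP (s : ℤ) (hs : Even s) :
    ∑' m : M, 1/(P (m:ℤ) * P ((m:ℤ) + s)) ≤ 1536/(n:ℝ)^2 := by
  set u : ℤ → ℝ := fun m => 32/(n:ℝ)^2 *
    ((1/(ee (m - (n:ℤ)))^2 + 1/(ee (-m - (n:ℤ)))^2) +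
     (1/(ee (m - ((n:ℤ) - s)))^2 + 1/(ee (-m - ((n:ℤ) + s)))^2)) with hu_def
  have hA := summable_F2_shift (n:ℤ)
  have hB := summable_F2_reflect (n:ℤ)
  have hC := summable_F2_shift ((n:ℤ) - s)
  have hD := summable_F2_reflect ((n:ℤ) + s)
  have hu : Summable u := (((hA.add hB).add (hC.add hD)).mul_left _)
  have hu0 : ∀ m : ℤ, 0 ≤ u m := by
    intro m
    have h1' : (0:ℝ) ≤ 1/(ee (m - (n:ℤ)))^2 := by positivity
    have h2' : (0:ℝ) ≤ 1/(ee (-m - (n:ℤ)))^2 := by positivity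
    have h3' : (0:ℝ) ≤ 1/(ee (m - ((n:ℤ) - s)))^2 := by positivity
    have h4' : (0:ℝ) ≤ 1/(ee (-m - ((n:ℤ) + s)))^2 := by positivity
    have hn2 : (0:ℝ) ≤ 32/(n:ℝ)^2 := by positivity
    simp only [hu_def]
    nlinarith
  have hx0 : ∀ m : M, 0 ≤ 1/(P (m:ℤ) * P ((m:ℤ) + s)) := by
    intro m
    have ha := norm_nonneg (lam - ((m:ℤ) : ℂ)^2)
    have hb := norm_nonneg (lam - (((m:ℤ) + s : ℤ) : ℂ)^2)
    positivity
  have hptw : ∀ m : M, 1/(P (m:ℤ) * P ((m:ℤ) + s)) ≤ u (m:ℤ) := by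
    intro m
    obtain ⟨a, ha⟩ := hs
    obtain ⟨j, hj⟩ := m.2
    have hpar1 : ∃ j' : ℤ, (m:ℤ) = (n:ℤ) + 2*j' := ⟨j, hj⟩
    have hpar2 : ∃ j' : ℤ, (m:ℤ) + s = (n:ℤ) + 2*j' := ⟨j + a, by omega⟩
    have hP1 := Dpos n hn lam h1 h2 h3 (m:ℤ) hpar1
    have hP2 := Dpos n hn lam h1 h2 h3 ((m:ℤ) + s) hpar2
    have hsq1 := inv_P_sq_le n hn lam h1 h2 h3 (m:ℤ) hpar1
    have hsq2 := inv_P_sq_le n hn lam h1 h2 h3 ((m:ℤ) + s) hpar2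
    have e1 : (m:ℤ) + s - n = (m:ℤ) - ((n:ℤ) - s) := by ring
    have e2 : -((m:ℤ) + s) - n = -(m:ℤ) - ((n:ℤ) + s) := by ring
    rw [e1, e2] at hsq2
    have hprod : 1/(P (m:ℤ) * P ((m:ℤ) + s))
        ≤ (1/2) * ((1/(P (m:ℤ)))^2 + (1/(P ((m:ℤ) + s)))^2) := by
      have key : 1/(P (m:ℤ) * P ((m:ℤ) + s)) = (1/(P (m:ℤ))) * (1/(P ((m:ℤ) + s))) := by
        rw [one_div, one_div, one_div, mul_inv]
      rw [key]
      nlinarith [sq_nonneg (1/(P (m:ℤ)) - 1/(P ((m:ℤ) + s)))]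
    have hn2 : (0:ℝ) < (n:ℝ)^2 := by positivity
    calc 1/(P (m:ℤ) * P ((m:ℤ) + s))
        ≤ (1/2) * ((1/(P (m:ℤ)))^2 + (1/(P ((m:ℤ) + s)))^2) := hprod
      _ ≤ (1/2) * (64/(n:ℝ)^2 * (1/(ee ((m:ℤ) - (n:ℤ)))^2 + 1/(ee (-(m:ℤ) - (n:ℤ)))^2)
            + 64/(n:ℝ)^2 * (1/(ee ((m:ℤ) - ((n:ℤ) - s)))^2 + 1/(ee (-(m:ℤ) - ((n:ℤ) + s)))^2)) := by
          have := add_le_add hsq1 hsq2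
          linarith
      _ = u (m:ℤ) := by simp only [hu_def]; ring
  by_cases hxsum : Summable (fun m : M => 1/(P (m:ℤ) * P ((m:ℤ) + s)))
  · have huM : Summable (fun m : M => u (m:ℤ)) := hu.subtype _
    have hF2 := tsum_F2_int
    calc ∑' m : M, 1/(P (m:ℤ) * P ((m:ℤ) + s))
        ≤ ∑' m : M, u (m:ℤ) := Summable.tsum_le_tsum hptw hxsum huM
      _ ≤ ∑' m : ℤ, u m := Summable.tsum_subtype_le u _ hu0 hu
      _ = 32/(n:ℝ)^2 * (((∑' m : ℤ, 1/(ee (m - (n:ℤ)))^2) + ∑' m : ℤ, 1/(ee (-m - (n:ℤ)))^2)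
            + ((∑' m : ℤ, 1/(ee (m - ((n:ℤ) - s)))^2) + ∑' m : ℤ, 1/(ee (-m - ((n:ℤ) + s)))^2)) := by
          rw [hu_def, tsum_mul_left, Summable.tsum_add (hA.add hB) (hC.add hD), Summable.tsum_add hA hB, Summable.tsum_add hC hD]
      _ = 32/(n:ℝ)^2 * (((∑' t : ℤ, 1/(ee t)^2) + ∑' t : ℤ, 1/(ee t)^2)
            + ((∑' t : ℤ, 1/(ee t)^2) + ∑' t : ℤ, 1/(ee t)^2)) := by
          rw [tsum_F2_shift, tsum_F2_reflect, tsum_F2_shift, tsum_F2_reflect]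
      _ ≤ 32/(n:ℝ)^2 * ((12 + 12) + (12 + 12)) := by
          apply mul_le_mul_of_nonneg_left _ (by positivity)
          have := tsum_F2_int
          linarith
      _ = 1536/(n:ℝ)^2 := by ring
  · rw [tsum_eq_zero_of_not_summable hxsum]
    positivity

include hn h1 h2 h3 in
lemma far_ptwise (s : ℤ) (hbig : 16*(n:ℝ)^2 < ((s:ℝ))^2)
    (m : ℤ) (hm : ∃ j : ℤ, m = (n:ℤ) + 2*j) (hm2 : ∃ j : ℤ, m + s = (n:ℤ) + 2*j) :
    1/(P m * P (m + s)) ≤ 8/((s:ℝ))^2 * (1/(P m) + 1/(P (m + s))) := by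
  have hN : (3:ℝ) ≤ (n:ℝ) := by exact_mod_cast hn
  have hs2 : (0:ℝ) < (s:ℝ)^2 := by nlinarith
  have hP1 := Dpos n hn lam h1 h2 h3 m hm
  have hP2 := Dpos n hn lam h1 h2 h3 (m + s) hm2
  have main : ∀ x y : ℝ, 0 < x → 0 < y → (s:ℝ)^2/8 ≤ x →
      1/(x*y) ≤ 8/((s:ℝ))^2 * (1/x + 1/y) := by
    intro x y hx hy hxs
    have h1' : 1/x ≤ 8/(s:ℝ)^2 := by
      calc 1/x ≤ 1/((s:ℝ)^2/8) := one_div_le_one_div_of_le (by linarith) hxs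
        _ = 8/(s:ℝ)^2 := one_div_div _ _
    calc 1/(x*y) = (1/x)*(1/y) := by rw [one_div, mul_inv, one_div, one_div]
      _ ≤ (8/(s:ℝ)^2)*(1/y) := mul_le_mul_of_nonneg_right h1' (by positivity)
      _ ≤ 8/((s:ℝ))^2 * (1/x + 1/y) := by
          have hx0 : (0:ℝ) ≤ 1/x := by positivity
          have hq : (0:ℝ) ≤ 8/(s:ℝ)^2 := by positivity
          nlinarith
  have htri : |s| ≤ |m + s| + |m| := by
    have := abs_sub (m + s) m
    simpa using this
  have hcases : (|s|:ℤ) ≤ 2*|m| ∨ (|s|:ℤ) ≤ 2*|m + s| := by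
    by_contra hcon
    push_neg at hcon
    obtain ⟨hc1, hc2⟩ := hcon
    omega
  have sqlow : ∀ k : ℤ, (|s|:ℤ) ≤ 2*|k| → (∃ j : ℤ, k = (n:ℤ) + 2*j) → (s:ℝ)^2/8 ≤ P k := by
    intro k hk hkpar
    have hk' : ((|s|:ℤ):ℝ) ≤ ((2*|k| : ℤ):ℝ) := by exact_mod_cast hk
    push_cast at hk'
    have hksq : (s:ℝ)^2/4 ≤ ((k:ℝ))^2 := by
      nlinarith [sq_abs (k:ℝ), sq_abs (s:ℝ), abs_nonneg (k:ℝ), abs_nonneg (s:ℝ)]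
    have habs := abs_sub_re lam k
    have hneg := neg_le_abs (lam.re - ((k:ℝ))^2)
    nlinarith
  rcases hcases with hc | hc
  · exact main (P m) (P (m + s)) hP1 hP2 (sqlow m hc hm)
  · have h := main (P (m + s)) (P m) hP2 hP1 (sqlow (m + s) hc hm2)
    calc 1/(P m * P (m + s)) = 1/(P (m + s) * P m) := by rw [mul_comm]
      _ ≤ 8/((s:ℝ))^2 * (1/(P (m + s)) + 1/(P m)) := h
      _ = 8/((s:ℝ))^2 * (1/(P m) + 1/(P (m + s))) := by ring

include hn h1 h2 h3 in
lemma per_s (q : ℤ → ℂ) (s : ℤ) (hs : Even s) :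
    ∑' m : M, ((s:ℝ)^2 * ‖q s‖^2 / (P (m:ℤ) * P ((m:ℤ) + s)))
      ≤ (if Real.sqrt n ≤ |((s:ℝ))| then 24576 * ‖q s‖^2 else 0)
        + 1536*(3 + Real.log n)/n * ‖q s‖^2 := by
  have hN : (3:ℝ) ≤ (n:ℝ) := by exact_mod_cast hn
  have hlog0 : (0:ℝ) ≤ Real.log n := Real.log_nonneg (by linarith)
  have hqn : (0:ℝ) ≤ ‖q s‖^2 := by positivity
  have hC : (0:ℝ) ≤ (s:ℝ)^2 * ‖q s‖^2 := by positivity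
  have hrw : (fun m : M => (s:ℝ)^2 * ‖q s‖^2 / (P (m:ℤ) * P ((m:ℤ) + s)))
      = fun m : M => (s:ℝ)^2 * ‖q s‖^2 * (1/(P (m:ℤ) * P ((m:ℤ) + s))) := by
    funext m
    rw [div_eq_mul_one_div]
  rw [hrw, tsum_mul_left]
  have hite : (0:ℝ) ≤ (if Real.sqrt n ≤ |((s:ℝ))| then 24576 * ‖q s‖^2 else 0) := by
    split <;> positivity
  have hR0 : (0:ℝ) ≤ ∑' m : M, 1/(P (m:ℤ) * P ((m:ℤ) + s)) := by
    apply tsum_nonneg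
    intro m
    have ha := norm_nonneg (lam - ((m:ℤ) : ℂ)^2)
    have hb := norm_nonneg (lam - (((m:ℤ) + s : ℤ) : ℂ)^2)
    positivity
  by_cases hsmall : (s:ℝ)^2 ≤ 16*(n:ℝ)^2
  · -- use the quadratic bound
    have hRb := sumM_PP n hn lam h1 h2 h3 s hs
    have step : (s:ℝ)^2 * ‖q s‖^2 * ∑' m : M, 1/(P (m:ℤ) * P ((m:ℤ) + s))
        ≤ (s:ℝ)^2 * ‖q s‖^2 * (1536/(n:ℝ)^2) := mul_le_mul_of_nonneg_left hRb hC
    by_cases hsqrt : Real.sqrt n ≤ |((s:ℝ))|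
    · rw [if_pos hsqrt]
      have : (s:ℝ)^2 * ‖q s‖^2 * (1536/(n:ℝ)^2) ≤ 24576 * ‖q s‖^2 := by
        rw [div_eq_mul_inv]
        have hinv : (0:ℝ) < ((n:ℝ)^2)⁻¹ := by positivity
        have h16 : (s:ℝ)^2 * ((n:ℝ)^2)⁻¹ ≤ 16 := by
          have hh := mul_le_mul_of_nonneg_right hsmall hinv.le
          rwa [mul_assoc, mul_inv_cancel₀ (by positivity : ((n:ℝ)^2) ≠ 0), mul_one] at hh
        nlinarith [mul_le_mul_of_nonneg_right h16 hqn]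
      have hrest : (0:ℝ) ≤ 1536*(3 + Real.log n)/n * ‖q s‖^2 := by positivity
      linarith
    · rw [if_neg hsqrt]
      push_neg at hsqrt
      have hsn : (s:ℝ)^2 ≤ (n:ℝ) := by
        have h0 : |((s:ℝ))| < Real.sqrt n := hsqrt
        have h1' : |((s:ℝ))|^2 < Real.sqrt n ^ 2 := by
          apply pow_lt_pow_left₀ h0 (abs_nonneg _)
          norm_num
        rw [Real.sq_sqrt (by linarith : (0:ℝ) ≤ (n:ℝ))] at h1'
        rw [← sq_abs]
        linarith
      have : (s:ℝ)^2 * ‖q s‖^2 * (1536/(n:ℝ)^2) ≤ 1536*(3 + Real.log n)/n * ‖q s‖^2 := by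
        have key : (s:ℝ)^2 * ‖q s‖^2 * (1536/(n:ℝ)^2) ≤ (n:ℝ) * ‖q s‖^2 * (1536/(n:ℝ)^2) := by
          apply mul_le_mul_of_nonneg_right _ (by positivity)
          exact mul_le_mul_of_nonneg_right hsn hqn
        have keq : (n:ℝ) * ‖q s‖^2 * (1536/(n:ℝ)^2) = 1536/(n:ℝ) * ‖q s‖^2 := by
          field_simp
        have kle : 1536/(n:ℝ) * ‖q s‖^2 ≤ 1536*(3 + Real.log n)/n * ‖q s‖^2 := by
          apply mul_le_mul_of_nonneg_right _ hqn
          apply div_le_div_of_nonneg_right _ (by linarith)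
          linarith
        calc (s:ℝ)^2 * ‖q s‖^2 * (1536/(n:ℝ)^2) ≤ (n:ℝ) * ‖q s‖^2 * (1536/(n:ℝ)^2) := key
          _ = 1536/(n:ℝ) * ‖q s‖^2 := keq
          _ ≤ 1536*(3 + Real.log n)/n * ‖q s‖^2 := kle
      linarith
  · -- far regime
    push_neg at hsmall
    have hs2 : (0:ℝ) < (s:ℝ)^2 := by nlinarith
    have hS0' := sumM_inv_P n hn lam h1 h2 h3 0 Even.zero
    have hSs := sumM_inv_P n hn lam h1 h2 h3 s hs
    have hS0sum : Summable (fun m : M => 1/(P ((m:ℤ)))) := by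
      have := hS0'.1
      simpa using this
    have hS0bound : ∑' m : M, 1/(P ((m:ℤ))) ≤ 32*(3 + Real.log n)/n := by
      have := hS0'.2
      simpa using this
    have hB0 : (0:ℝ) ≤ 32*(3 + Real.log n)/n := by positivity
    have hRb : ∑' m : M, 1/(P (m:ℤ) * P ((m:ℤ) + s))
        ≤ 8/((s:ℝ))^2 * (2 * (32*(3 + Real.log n)/n)) := by
      by_cases hxsum : Summable (fun m : M => 1/(P (m:ℤ) * P ((m:ℤ) + s)))
      · have hysum : Summable (fun m : M => 8/((s:ℝ))^2 * (1/(P (m:ℤ)) + 1/(P ((m:ℤ) + s)))) :=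
          ((hS0sum.add hSs.1).mul_left _)
        have hptw : ∀ m : M, 1/(P (m:ℤ) * P ((m:ℤ) + s))
            ≤ 8/((s:ℝ))^2 * (1/(P (m:ℤ)) + 1/(P ((m:ℤ) + s))) := by
          intro m
          obtain ⟨a, ha⟩ := hs
          obtain ⟨j, hj⟩ := m.2
          exact far_ptwise n hn lam h1 h2 h3 s hsmall (m:ℤ) ⟨j, hj⟩ ⟨j + a, by omega⟩
        calc ∑' m : M, 1/(P (m:ℤ) * P ((m:ℤ) + s))
            ≤ ∑' m : M, 8/((s:ℝ))^2 * (1/(P (m:ℤ)) + 1/(P ((m:ℤ) + s))) :=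
              Summable.tsum_le_tsum hptw hxsum hysum
          _ = 8/((s:ℝ))^2 * ((∑' m : M, 1/(P (m:ℤ))) + ∑' m : M, 1/(P ((m:ℤ) + s))) := by
              rw [tsum_mul_left, Summable.tsum_add hS0sum hSs.1]
          _ ≤ 8/((s:ℝ))^2 * (2 * (32*(3 + Real.log n)/n)) := by
              apply mul_le_mul_of_nonneg_left _ (by positivity)
              have := hSs.2
              linarith [hS0bound]
      · rw [tsum_eq_zero_of_not_summable hxsum]
        positivity
    have step := mul_le_mul_of_nonneg_left hRb hC
    have keq : (s:ℝ)^2 * ‖q s‖^2 * (8/((s:ℝ))^2 * (2 * (32*(3 + Real.log n)/n)))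
        = 512*(3 + Real.log n)/n * ‖q s‖^2 := by
      have hs0 : (s:ℝ) ≠ 0 := fun h => by simp [h] at hs2
      field_simp
      ring
    have kle : 512*(3 + Real.log n)/n * ‖q s‖^2 ≤ 1536*(3 + Real.log n)/n * ‖q s‖^2 := by
      apply mul_le_mul_of_nonneg_right _ hqn
      apply div_le_div_of_nonneg_right _ (by linarith)
      linarith
    linarith [step, keq ▸ step]

end Main3
end Stmt19Aux


/-- There is an absolute constant `C` such that for every `q ∈ ℓ²(2ℤ)`, every integer
`n ≥ 3` and every `λ ∈ ℂ` with `(n-1)² ≤ Re λ ≤ (n+1)²` and `|λ - n²| ≥ n/4`,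
`∑_{s ∈ 2ℤ} ∑_{m ∈ n+2ℤ} s²|q(s)|²/(|λ-m²||λ-(m+s)²|)
  ≤ C·(E_{√n}(q)² + ‖q‖²/n·(1+log n))`,
where `E_ρ(q)² = ∑_{|s| ≥ ρ} |q(s)|²`. -/
theorem stmt19 :
    ∃ C : ℝ, 0 < C ∧ ∀ (q : ℤ → ℂ),
      (Summable fun s : {s : ℤ // Even s} => ‖q s‖^2) →
      ∀ (n : ℕ), 3 ≤ n → ∀ lam : ℂ,
        ((n : ℝ) - 1)^2 ≤ lam.re → lam.re ≤ ((n : ℝ) + 1)^2 →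
        (n : ℝ) / 4 ≤ ‖lam - (n : ℂ)^2‖ →
        (∑' (s : {s : ℤ // Even s}) (m : {m : ℤ // ∃ j : ℤ, m = (n : ℤ) + 2 * j}),
            ((s : ℤ) : ℝ)^2 * ‖q s‖^2 /
              (‖lam - ((m : ℤ) : ℂ)^2‖ *
                ‖lam - (((m : ℤ) + (s : ℤ) : ℤ) : ℂ)^2‖))
          ≤ C * ((∑' s : {s : ℤ // Even s ∧ Real.sqrt n ≤ |(s : ℤ)|}, ‖q s‖^2) +
              (∑' s : {s : ℤ // Even s}, ‖q s‖^2) / n * (1 + Real.log n)) := by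
  classical
  refine ⟨24576, by norm_num, ?_⟩
  intro q hq n hn lam h1 h2 h3
  have hN : (3:ℝ) ≤ (n:ℝ) := by exact_mod_cast hn
  have hn0 : (0:ℝ) < (n:ℝ) := by linarith
  have hlog0 : (0:ℝ) ≤ Real.log n := Real.log_nonneg (by linarith)
  have hQ0 : (0:ℝ) ≤ ∑' s : {s : ℤ // Even s}, ‖q s‖^2 :=
    tsum_nonneg (fun s => by positivity)
  have hEt0 : (0:ℝ) ≤ ∑' s : {s : ℤ // Even s ∧ Real.sqrt n ≤ |(s : ℤ)|}, ‖q s‖^2 :=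
    tsum_nonneg (fun s => by positivity)
  have hRHS0 : (0:ℝ) ≤ 24576 * ((∑' s : {s : ℤ // Even s ∧ Real.sqrt n ≤ |(s : ℤ)|}, ‖q s‖^2) +
      (∑' s : {s : ℤ // Even s}, ‖q s‖^2) / n * (1 + Real.log n)) := by
    have : (0:ℝ) ≤ (∑' s : {s : ℤ // Even s}, ‖q s‖^2) / n * (1 + Real.log n) := by
      apply mul_nonneg (div_nonneg hQ0 (by linarith)) (by linarith)
    linarith
  have hper : ∀ s : {s : ℤ // Even s},
      (∑' m : {m : ℤ // ∃ j : ℤ, m = (n : ℤ) + 2 * j},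
        ((s : ℤ) : ℝ)^2 * ‖q s‖^2 /
          (‖lam - ((m : ℤ) : ℂ)^2‖ *
            ‖lam - (((m : ℤ) + (s : ℤ) : ℤ) : ℂ)^2‖))
      ≤ (if Real.sqrt n ≤ |(((s:ℤ)):ℝ)| then 24576 * ‖q s‖^2 else 0)
          + 1536*(3 + Real.log n)/(n:ℝ) * ‖q s‖^2 := by
    intro s
    have h0 := Stmt19Aux.per_s n hn lam h1 h2 h3 q (s:ℤ) s.2
    simpa only [] using h0
  have hsum1 : Summable (fun s : {s : ℤ // Even s} =>
      if Real.sqrt n ≤ |(((s:ℤ)):ℝ)| then 24576 * ‖q s‖^2 else 0) := by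
    apply Summable.of_nonneg_of_le _ _ (hq.mul_left 24576)
    · intro s; split <;> positivity
    · intro s
      split
      · exact le_rfl
      · positivity
  have hsum2 : Summable (fun s : {s : ℤ // Even s} =>
      1536*(3 + Real.log n)/(n:ℝ) * ‖q s‖^2) := hq.mul_left _
  by_cases hg : Summable (fun s : {s : ℤ // Even s} =>
      ∑' m : {m : ℤ // ∃ j : ℤ, m = (n : ℤ) + 2 * j},
        ((s : ℤ) : ℝ)^2 * ‖q s‖^2 /
          (‖lam - ((m : ℤ) : ℂ)^2‖ *
            ‖lam - (((m : ℤ) + (s : ℤ) : ℤ) : ℂ)^2‖))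
  · have step1 := Summable.tsum_le_tsum hper hg (hsum1.add hsum2)
    have step2 := Summable.tsum_add hsum1 hsum2
    have step3 : ∑' s : {s : ℤ // Even s},
        (if Real.sqrt n ≤ |(((s:ℤ)):ℝ)| then 24576 * ‖q s‖^2 else 0)
        = 24576 * ∑' s : {s : ℤ // Even s},
            (if Real.sqrt n ≤ |(((s:ℤ)):ℝ)| then ‖q s‖^2 else 0) := by
      rw [← tsum_mul_left]
      exact tsum_congr fun s => by split_ifs <;> simp
    have step4 : ∑' s : {s : ℤ // Even s},
        (if Real.sqrt n ≤ |(((s:ℤ)):ℝ)| then ‖q s‖^2 else 0)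
        = ∑' s : {s : ℤ // Even s ∧ Real.sqrt n ≤ |(s : ℤ)|}, ‖q s‖^2 := by
      have e1 := tsum_subtype (α := ℝ) {s : ℤ | Even s}
        (fun x : ℤ => if Real.sqrt n ≤ |((x:ℤ):ℝ)| then ‖q x‖^2 else 0)
      have e2 := tsum_subtype (α := ℝ) {s : ℤ | Even s ∧ Real.sqrt n ≤ |(s : ℤ)|}
        (fun x : ℤ => ‖q x‖^2)
      have e1' : (∑' s : {s : ℤ // Even s},
          (if Real.sqrt n ≤ |(((s:ℤ)):ℝ)| then ‖q s‖^2 else 0))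
          = ∑' (x : ↥{s : ℤ | Even s}),
              (fun x : ℤ => if Real.sqrt n ≤ |((x:ℤ):ℝ)| then ‖q x‖^2 else 0) ↑x := rfl
      have e2' : (∑' s : {s : ℤ // Even s ∧ Real.sqrt n ≤ |(s : ℤ)|}, ‖q s‖^2)
          = ∑' (x : ↥{s : ℤ | Even s ∧ Real.sqrt n ≤ |(s : ℤ)|}),
              (fun x : ℤ => ‖q x‖^2) ↑x := rfl
      rw [e1', e2', e1, e2]
      apply tsum_congr
      intro x
      by_cases hx1 : Even x <;> by_cases hx2 : Real.sqrt n ≤ |((x:ℤ):ℝ)| <;>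
        simp [Set.indicator_apply, hx1, hx2, Set.mem_setOf_eq, Int.cast_abs]
    have step5 : ∑' s : {s : ℤ // Even s}, (1536*(3 + Real.log n)/(n:ℝ) * ‖q s‖^2)
        = 1536*(3 + Real.log n)/(n:ℝ) * ∑' s : {s : ℤ // Even s}, ‖q s‖^2 :=
      tsum_mul_left
    have final : 24576 * (∑' s : {s : ℤ // Even s ∧ Real.sqrt n ≤ |(s : ℤ)|}, ‖q s‖^2)
        + 1536*(3 + Real.log n)/(n:ℝ) * (∑' s : {s : ℤ // Even s}, ‖q s‖^2)
        ≤ 24576 * ((∑' s : {s : ℤ // Even s ∧ Real.sqrt n ≤ |(s : ℤ)|}, ‖q s‖^2) +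
            (∑' s : {s : ℤ // Even s}, ‖q s‖^2) / n * (1 + Real.log n)) := by
      have key : 1536*(3 + Real.log n)/(n:ℝ) * (∑' s : {s : ℤ // Even s}, ‖q s‖^2)
          ≤ 24576 * ((∑' s : {s : ℤ // Even s}, ‖q s‖^2) / n * (1 + Real.log n)) := by
        rw [div_eq_mul_inv, div_eq_mul_inv]
        have hinv : (0:ℝ) ≤ ((n:ℝ))⁻¹ := by positivity
        nlinarith [mul_nonneg (mul_nonneg hQ0 hinv) hlog0, mul_nonneg hQ0 hinv]
      linarith
    calc (∑' (s : {s : ℤ // Even s}) (m : {m : ℤ // ∃ j : ℤ, m = (n : ℤ) + 2 * j}),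
            ((s : ℤ) : ℝ)^2 * ‖q s‖^2 /
              (‖lam - ((m : ℤ) : ℂ)^2‖ *
                ‖lam - (((m : ℤ) + (s : ℤ) : ℤ) : ℂ)^2‖))
        ≤ ∑' s : {s : ℤ // Even s},
            ((if Real.sqrt n ≤ |(((s:ℤ)):ℝ)| then 24576 * ‖q s‖^2 else 0)
              + 1536*(3 + Real.log n)/(n:ℝ) * ‖q s‖^2) := step1
      _ = 24576 * (∑' s : {s : ℤ // Even s ∧ Real.sqrt n ≤ |(s : ℤ)|}, ‖q s‖^2)
            + 1536*(3 + Real.log n)/(n:ℝ) * (∑' s : {s : ℤ // Even s}, ‖q s‖^2) := by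
          rw [step2, step3, step4, step5]
      _ ≤ _ := final
  · rw [tsum_eq_zero_of_not_summable hg]
    exact hRHS0
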